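/- For every z ∈ ℂ \ Λ, the family of terms −2/(z−ω)³, indexed by ω ∈ Λ (including ω = 0), is summable, the function ℘ has complex derivative ℘'(z) = −2 Σ_{ω ∈ Λ} 1/(z−ω)³ at z, and ℘' is odd: ℘'(−z) = −℘'(z). -/

import Mathlib

/-- The period lattice Λ = {2mω₁ + 2nω₃ : m, n ∈ ℤ}. -/
def periodLattice (ω₁ ω₃ : ℂ) : Set ℂ :=
  {z : ℂ | ∃ m n : ℤ, z = 2 * (m : ℂ) * ω₁ + 2 * (n : ℂ) * ω₃}

/-- The Weierstrass elliptic function ℘. -/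
noncomputable def weierstrassP (ω₁ ω₃ : ℂ) (z : ℂ) : ℂ :=
  1 / z ^ 2 + ∑' w : {w : ℂ // w ∈ periodLattice ω₁ ω₃ ∧ w ≠ 0},
    (1 / (z - (w : ℂ)) ^ 2 - 1 / (w : ℂ) ^ 2)

/-- The derivative series ℘'(z) = −2 Σ_{ω ∈ Λ} 1/(z−ω)³ (sum over all of Λ,
including ω = 0). -/
noncomputable def weierstrassPDeriv (ω₁ ω₃ : ℂ) (z : ℂ) : ℂ :=
  ∑' w : {w : ℂ // w ∈ periodLattice ω₁ ω₃}, (-2 / (z - (w : ℂ)) ^ 3)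

/-!
With the periods `2ω₁, 2ω₃`, which are `ℝ`-linearly independent exactly because `ω₃ / ω₁` is not
real, `Λ` is the lattice of a `PeriodPair`, and the two series are Mathlib's `℘` and `℘'`. Their
locally uniform convergence gives the summability and termwise differentiation, and the symmetry
`ω ↦ -ω` of `Λ` makes `℘'` odd.
-/

open scoped PeriodPair

lemma Complex.linearIndependent_pair_of_div_notMem_range {a b : ℂ}
    (h : b / a ∉ Set.range ((↑) : ℝ → ℂ)) : LinearIndependent ℝ ![a, b] := by
  have ha : a ≠ 0 := by
    rintro rfl
    exact h ⟨0, by simp⟩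
  refine (LinearIndependent.pair_iff' ha).mpr fun r hr => h ⟨r, ?_⟩
  rw [← hr, Complex.real_smul, mul_div_cancel_right₀ _ ha]

theorem tsum_subtype_and_ne {α M : Type*} [DecidableEq α] [AddCommMonoid M] [TopologicalSpace M]
    (s : Set α) (a : α) (f : α → M) :
    ∑' x : {x // x ∈ s ∧ x ≠ a}, f x = ∑' x : s, if (x : α) = a then 0 else f x := by
  rw [tsum_subtype s fun x => if x = a then 0 else f x]
  refine (tsum_subtype {x | x ∈ s ∧ x ≠ a} f).trans (tsum_congr fun x => ?_)
  by_cases hx : x = a <;> by_cases hs : x ∈ s <;> simp [Set.indicator, hx, hs]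

theorem PeriodPair.hasDerivAt_weierstrassP (L : PeriodPair) {z : ℂ} (hz : z ∉ L.lattice) :
    HasDerivAt ℘[L] (℘'[L] z) z := by
  have hdiff : DifferentiableAt ℂ ℘[L] z :=
    (L.differentiableOn_weierstrassP z hz).differentiableAt
      (L.isClosed_lattice.isOpen_compl.mem_nhds hz)
  simpa using hdiff.hasDerivAt

section HalfPeriods

variable {ω₁ ω₃ : ℂ} (hτ : ω₃ / ω₁ ∉ Set.range ((↑) : ℝ → ℂ))

/-- In the classical notation `ω₁, ω₃` are half-periods: the periods are `2ω₁` and `2ω₃`. -/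
def halfPeriodPair : PeriodPair where
  ω₁ := 2 * ω₁
  ω₂ := 2 * ω₃
  indep := Complex.linearIndependent_pair_of_div_notMem_range <| by
    rwa [mul_div_mul_left _ _ two_ne_zero]

theorem mem_periodLattice_iff {z : ℂ} :
    z ∈ periodLattice ω₁ ω₃ ↔ z ∈ (halfPeriodPair hτ).lattice := by
  rw [PeriodPair.mem_lattice]
  simp only [periodLattice, halfPeriodPair, Set.mem_ofPred_eq]
  constructor <;> rintro ⟨m, n, h⟩ <;> exact ⟨m, n, by linear_combination -h⟩

def periodLatticeEquiv : {w // w ∈ periodLattice ω₁ ω₃} ≃ (halfPeriodPair hτ).lattice :=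
  Equiv.subtypeEquivRight fun _ => mem_periodLattice_iff hτ

theorem weierstrassP_eq_weierstrassP_halfPeriodPair :
    weierstrassP ω₁ ω₃ = ℘[halfPeriodPair hτ] := by
  funext z
  -- Mathlib sums over all of `Λ`; its `ω = 0` term is `1 / z ^ 2 - 1 / 0 ^ 2 = 1 / z ^ 2`.
  rw [← (halfPeriodPair hτ).weierstrassPExcept_add 0, weierstrassP, PeriodPair.weierstrassPExcept,
    tsum_subtype_and_ne (periodLattice ω₁ ω₃) 0 fun w => 1 / (z - w) ^ 2 - 1 / w ^ 2,
    ← (periodLatticeEquiv hτ).tsum_eq]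
  simp [add_comm, periodLatticeEquiv]

theorem hasSum_neg_two_div_sub_pow_three (z : ℂ) :
    HasSum (fun w : {w // w ∈ periodLattice ω₁ ω₃} => -2 / (z - (w : ℂ)) ^ 3)
      (℘'[halfPeriodPair hτ] z) :=
  (periodLatticeEquiv hτ).hasSum_iff.mpr ((halfPeriodPair hτ).hasSum_derivWeierstrassP z)

theorem weierstrassPDeriv_eq_derivWeierstrassP_halfPeriodPair :
    weierstrassPDeriv ω₁ ω₃ = ℘'[halfPeriodPair hτ] :=
  funext fun z => (hasSum_neg_two_div_sub_pow_three hτ z).tsum_eq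

end HalfPeriods

theorem weierstrassP_hasDerivAt_and_deriv_odd_general
    (ω₁ ω₃ : ℂ)
    (hτ : ω₃ / ω₁ ∉ Set.range ((↑) : ℝ → ℂ)) :
    ∀ z : ℂ, z ∉ periodLattice ω₁ ω₃ →
      Summable (fun w : {w : ℂ // w ∈ periodLattice ω₁ ω₃} =>
        -2 / (z - (w : ℂ)) ^ 3) ∧
      HasDerivAt (weierstrassP ω₁ ω₃) (weierstrassPDeriv ω₁ ω₃ z) z ∧
      weierstrassPDeriv ω₁ ω₃ (-z) = - weierstrassPDeriv ω₁ ω₃ z := by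
  intro z hz
  rw [weierstrassP_eq_weierstrassP_halfPeriodPair hτ,
    weierstrassPDeriv_eq_derivWeierstrassP_halfPeriodPair hτ]
  exact ⟨(hasSum_neg_two_div_sub_pow_three hτ z).summable,
    PeriodPair.hasDerivAt_weierstrassP _ fun h => hz ((mem_periodLattice_iff hτ).mpr h),
    PeriodPair.derivWeierstrassP_neg _ z⟩

/-- For `z ∈ ℂ \ Λ`: the family `−2/(z−ω)³` (ω ∈ Λ) is summable, ℘ has complex
derivative `℘'(z) = −2 Σ_{ω ∈ Λ} 1/(z−ω)³` at `z`, and ℘' is odd. -/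
theorem weierstrassP_hasDerivAt_and_deriv_odd
    (ω₁ ω₃ : ℂ) (hω₁ : ω₁ ≠ 0) (hω₃ : ω₃ ≠ 0)
    (hτ : ω₃ / ω₁ ∉ Set.range ((↑) : ℝ → ℂ)) :
    ∀ z : ℂ, z ∉ periodLattice ω₁ ω₃ →
      Summable (fun w : {w : ℂ // w ∈ periodLattice ω₁ ω₃} =>
        -2 / (z - (w : ℂ)) ^ 3) ∧
      HasDerivAt (weierstrassP ω₁ ω₃) (weierstrassPDeriv ω₁ ω₃ z) z ∧
      weierstrassPDeriv ω₁ ω₃ (-z) = - weierstrassPDeriv ω₁ ω₃ z :=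
  weierstrassP_hasDerivAt_and_deriv_odd_general ω₁ ω₃ hτ
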